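/- arXiv:1508.05922 — 4 statements merged into one kernel-verified Lean document; each statement's English description precedes it below -/
import Mathlib

section
/- Let A be a finite-dimensional commutative Frobenius algebra over K with Euler element e and counit ε. Define Ω_{g,n}(v₁,...,vₙ) = ε(v₁⋯vₙ e^g). Then the splitting relation Ω_{g₁+g₂, n₁+n₂}(u₁,...,u_{n₁}, w₁,...,w_{n₂}) = Σ_{a,b} Ω_{g₁, n₁+1}(u₁,...,u_{n₁}, e_a) Ω_{g₂, n₂+1}(w₁,...,w_{n₂}, e_b) η^{ab} holds. -/
/-! Every `v` is recovered from its pairings as `v = Σ_{a,b} η(v, e_a) η^{ab} e_b`, and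
`η(1, xy) = η(x, y)` by the Frobenius property; so splitting `u⋯w e^{g₁+g₂}` as `x y` with
`x = u e^{g₁}`, `y = w e^{g₂}` and expanding `x` gives the relation. -/

open Finset

section InversePairing

variable {K M ι : Type*} [CommSemiring K] [AddCommMonoid M] [Module K M]
  [Fintype ι] [DecidableEq ι]
  {η : M →ₗ[K] M →ₗ[K] K} {e : Module.Basis ι K M} {ηinv : ι → ι → K}

theorem sum_pairing_mul_inv_eq_repr
    (hinv : ∀ i k, ∑ j, η (e i) (e j) * ηinv j k = if i = k then (1 : K) else 0)
    (x : M) (b : ι) :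
    ∑ a, η x (e a) * ηinv a b = e.repr x b := by
  calc ∑ a, η x (e a) * ηinv a b
      = ∑ a, (∑ k, e.repr x k * η (e k) (e a)) * ηinv a b := by
        conv_lhs => rw [← e.sum_repr x]
        simp only [map_sum, map_smul, LinearMap.sum_apply, LinearMap.smul_apply, smul_eq_mul]
    _ = ∑ k, e.repr x k * ∑ a, η (e k) (e a) * ηinv a b := by
        simp only [sum_mul, mul_sum, mul_assoc]
        exact sum_comm
    _ = e.repr x b := by simp [hinv]

theorem sum_pairing_mul_inv_smul_eq
    (hinv : ∀ i k, ∑ j, η (e i) (e j) * ηinv j k = if i = k then (1 : K) else 0)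
    (x : M) :
    ∑ b, (∑ a, η x (e a) * ηinv a b) • e b = x := by
  simp only [sum_pairing_mul_inv_eq_repr hinv, e.sum_repr]

theorem map_eq_sum_pairing_mul_inv
    (hinv : ∀ i k, ∑ j, η (e i) (e j) * ηinv j k = if i = k then (1 : K) else 0)
    (f : M →ₗ[K] K) (x : M) :
    f x = ∑ a, ∑ b, η x (e a) * f (e b) * ηinv a b := by
  conv_lhs => rw [← sum_pairing_mul_inv_smul_eq hinv x]
  simp only [map_sum, map_smul, smul_eq_mul, sum_mul]
  rw [sum_comm]
  exact sum_congr rfl fun a _ => sum_congr rfl fun b _ => by ring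

end InversePairing

theorem counit_mul_eq_sum_counit_mul_inv {K A ι : Type*} [CommSemiring K] [CommSemiring A]
    [Module K A] [Fintype ι] [DecidableEq ι]
    (η : A →ₗ[K] A →ₗ[K] K) (hfrob : ∀ u v w : A, η u (v * w) = η (u * v) w)
    (e : Module.Basis ι K A) (ηinv : ι → ι → K)
    (hinv : ∀ i k, ∑ j, η (e i) (e j) * ηinv j k = if i = k then (1 : K) else 0) (x y : A) :
    η 1 (x * y) = ∑ a, ∑ b, η 1 (x * e a) * η 1 (y * e b) * ηinv a b := by
  have counit_mul : ∀ v w : A, η 1 (v * w) = η v w := fun v w => by rw [hfrob, one_mul]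
  rw [mul_comm]
  simp only [counit_mul]
  exact map_eq_sum_pairing_mul_inv hinv (η y) x

theorem tqft_splitting_relation_general
    {K A : Type*} [Field K] [CommRing A] [Algebra K A]
    (η : A →ₗ[K] A →ₗ[K] K)
    (hfrob : ∀ u v w : A, η u (v * w) = η (u * v) w)
    {r : ℕ} (e : Module.Basis (Fin r) K A) (ηinv : Fin r → Fin r → K)
    (hinv : ∀ i k : Fin r, ∑ j, η (e i) (e j) * ηinv j k = if i = k then (1 : K) else 0)
    (E : A)
    (g₁ g₂ n₁ n₂ : ℕ) (u : Fin n₁ → A) (w : Fin n₂ → A) :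
    η 1 ((∏ i, u i) * (∏ j, w j) * E ^ (g₁ + g₂))
      = ∑ a, ∑ b,
          η 1 ((∏ i, u i) * e a * E ^ g₁) * η 1 ((∏ j, w j) * e b * E ^ g₂) * ηinv a b := by
  have split : (∏ i, u i) * (∏ j, w j) * E ^ (g₁ + g₂)
      = ((∏ i, u i) * E ^ g₁) * ((∏ j, w j) * E ^ g₂) := by ring
  rw [split, counit_mul_eq_sum_counit_mul_inv η hfrob e ηinv hinv]
  simp only [mul_right_comm _ (E ^ _) (e _)]

/-- With `Ω_{g,n}(v₁,…,vₙ) = ε(v₁⋯vₙ 𝐞^g)`, the splitting relation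
`Ω_{g₁+g₂,n₁+n₂}(u,w) = Σ_{a,b} Ω_{g₁,n₁+1}(u,e_a) Ω_{g₂,n₂+1}(w,e_b) η^{ab}` holds. -/
theorem tqft_splitting_relation
    {K A : Type*} [Field K] [CommRing A] [Algebra K A] [FiniteDimensional K A]
    (η : A →ₗ[K] A →ₗ[K] K)
    (hsym : ∀ u v : A, η u v = η v u)
    (hfrob : ∀ u v w : A, η u (v * w) = η (u * v) w)
    {r : ℕ} (e : Module.Basis (Fin r) K A) (ηinv : Fin r → Fin r → K)
    (hinv : ∀ i k : Fin r, ∑ j, η (e i) (e j) * ηinv j k = if i = k then (1 : K) else 0)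
    (E : A) (hE : E = ∑ a, ∑ b, ηinv a b • (e a * e b))
    (g₁ g₂ n₁ n₂ : ℕ) (u : Fin n₁ → A) (w : Fin n₂ → A) :
    η 1 ((∏ i, u i) * (∏ j, w j) * E ^ (g₁ + g₂))
      = ∑ a, ∑ b,
          η 1 ((∏ i, u i) * e a * E ^ g₁) * η 1 ((∏ j, w j) * e b * E ^ g₂) * ηinv a b :=
  tqft_splitting_relation_general η hfrob e ηinv hinv E g₁ g₂ n₁ n₂ u w
end

section
/- The sequence T_d defined by T₁ = 1 and the recursion (d-1)T_d = (1/2) Σ_{a+b=d, a,b≥1} a·b·C(d,a)·T_a·T_b satisfies T_d = d^{d-2} for all d ≥ 1 (Cayley's formula). -/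
open Polynomial Finset

/-- Abel polynomials `A_n(x) = x (x+n)^{n-1}`, with `A_0 = 1`. -/
noncomputable def abP (R : Type*) [CommRing R] : ℕ → R[X]
  | 0 => 1
  | n+1 => X * (X + (n+1 : R[X])) ^ n

variable {R : Type*} [CommRing R]

lemma Ab_eval_zero (n : ℕ) : (abP R (n+1)).eval 0 = 0 := by
  simp [abP]

lemma Ab_deriv (n : ℕ) :
    derivative (abP R (n+1)) = ((n:R[X])+1) * (abP R n).comp (X + 1) := by
  cases n with
  | zero => simp [abP]
  | succ m =>
    simp only [abP]
    simp only [derivative_mul, derivative_X, derivative_pow, derivative_add,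
      derivative_natCast, derivative_one, mul_comp, pow_comp, add_comp, X_comp,
      natCast_comp, one_comp]
    simp only [map_add, map_one, C_eq_natCast]
    push_cast
    ring

lemma Ab_deriv_zero : derivative (abP R 0) = 0 := by simp [abP]

lemma abel_identity (y : R) [IsDomain R] [CharZero R] :
    ∀ n : ℕ, ∑ k ∈ range (n+1), (n.choose k : R[X]) * abP R k * C ((abP R (n-k)).eval y)
      = (abP R n).comp (X + C y) := by
  intro n
  induction n with
  | zero => simp [abP]
  | succ n ih =>
    set L := ∑ k ∈ range (n+2), ((n+1).choose k : R[X]) * abP R k * C ((abP R (n+1-k)).eval y) with hLdef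
    set Rr := (abP R (n+1)).comp (X + C y) with hRdef
    have hcomp : ((abP R n).comp (X + C y)).comp (X + 1)
        = ∑ k ∈ range (n+1), (n.choose k : R[X]) * (abP R k).comp (X + 1)
            * C ((abP R (n-k)).eval y) := by
      rw [← ih, Polynomial.sum_comp]
      refine Finset.sum_congr rfl fun k _ => ?_
      simp [mul_comp]
    have hder : derivative L = derivative Rr := by
      rw [hLdef, hRdef, derivative_sum, derivative_comp, Ab_deriv]
      rw [Finset.sum_range_succ']
      simp only [derivative_mul, derivative_C, derivative_natCast, mul_zero, add_zero,
        zero_mul, zero_add, Ab_deriv_zero]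
      have hR : derivative (X + C y) * ((((n:R[X])+1) * (abP R n).comp (X + 1)).comp (X + C y))
          = ((n:R[X])+1) * (((abP R n).comp (X + C y)).comp (X + 1)) := by
        simp only [derivative_add, derivative_X, derivative_C, add_zero, one_mul, mul_comp,
          add_comp, natCast_comp, one_comp, Polynomial.comp_assoc, X_comp, C_comp]
        rw [show (X + C y + 1 : R[X]) = X + 1 + C y by ring]
      rw [hR, hcomp, Finset.mul_sum]
      refine Finset.sum_congr rfl fun k _ => ?_
      rw [Ab_deriv]
      have harg : n + 1 - (k+1) = n - k := by omega
      rw [harg]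
      have hch : ((n+1).choose (k+1) : R[X]) * ((k:R[X])+1) = ((n:R[X])+1) * (n.choose k : R[X]) := by
        have h := Nat.add_one_mul_choose_eq n k
        have : (((n+1) * n.choose k : ℕ) : R[X]) = (((n+1).choose (k+1) * (k+1) : ℕ) : R[X]) := by
          exact_mod_cast congrArg (Nat.cast (R := R[X])) h
        push_cast at this
        linear_combination -this
      linear_combination (abP R k).comp (X + 1) * C ((abP R (n-k)).eval y) * hch
    have hev : L.eval 0 = Rr.eval 0 := by
      rw [hLdef, hRdef, eval_comp]
      simp only [eval_finset_sum, eval_mul, eval_natCast, eval_C, eval_add, eval_X, zero_add]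
      rw [Finset.sum_range_succ']
      have h0 : ∀ k ∈ range (n+1), ((n+1).choose (k+1) : R) * (abP R (k+1)).eval 0
          * (abP R (n+1-(k+1))).eval y = 0 := by
        intro k _
        rw [Ab_eval_zero]
        ring
      rw [Finset.sum_congr rfl h0, Finset.sum_const, smul_zero, zero_add]
      simp [abP]
    have hsub : derivative (L - Rr) = 0 := by rw [derivative_sub, hder, sub_self]
    have hC := Polynomial.eq_C_of_derivative_eq_zero hsub
    have : (L - Rr).coeff 0 = 0 := by
      have := congrArg (eval 0) hC
      rw [eval_sub, hev, sub_self, eval_C] at this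
      exact this.symm
    rw [this, map_zero, sub_eq_zero] at hC
    exact hC

lemma Ab_eval_succ (y : R) (j : ℕ) : (abP R (j+1)).eval y = y * (y + ((j:R)+1))^j := by
  simp [abP]

lemma Ab_deriv_eval_zero (k : ℕ) : (derivative (abP R (k+1))).eval 0 = ((k:R)+1)^k := by
  rw [Ab_deriv]
  cases k with
  | zero => simp [abP]
  | succ j =>
    rw [eval_mul, eval_comp]
    simp only [eval_add, eval_natCast, eval_one, eval_X, Ab_eval_succ, zero_add]
    push_cast
    ring

lemma Ab_eval_X (m : ℕ) : (abP (Polynomial ℚ) m).eval (X : Polynomial ℚ) = abP ℚ m := by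
  cases m with
  | zero => simp [abP]
  | succ j => rw [Ab_eval_succ]; simp [abP]

lemma key (j : ℕ) :
    ∑ a ∈ Finset.Ioo 0 (j+2), ((j+2).choose a : ℚ) * (a:ℚ)^(a-1) * (((j+2-a : ℕ)):ℚ)^(j+2-a-1)
      = 2*((j:ℚ)+1)*((j:ℚ)+2)^j := by
  have h := abel_identity (R := Polynomial ℚ) (X : Polynomial ℚ) (j+2)
  have h1' := congrArg (fun p => (derivative p).eval 0) h
  simp only [derivative_sum, derivative_mul, derivative_natCast, derivative_C, zero_mul,
    mul_zero, add_zero, zero_add, eval_finset_sum, eval_mul, eval_natCast, eval_C,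
    derivative_comp, show (j+2) = (j+1)+1 from rfl, Ab_deriv, derivative_add, derivative_X,
    mul_comp, add_comp, natCast_comp, one_comp, eval_comp, eval_add, eval_X, eval_one,
    one_mul] at h1'
  rw [Finset.sum_range_succ'] at h1'
  simp only [Nat.succ_sub_succ_eq_sub, Ab_deriv_eval_zero, Ab_eval_X, Ab_eval_succ,
    show (abP (Polynomial ℚ) 0) = 1 from rfl, derivative_one, eval_zero, mul_zero, zero_mul,
    add_zero] at h1'
  have h2 := congrArg (fun p => (derivative p).eval 0) h1'
  simp only [derivative_sum, derivative_mul, derivative_natCast, derivative_pow,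
    derivative_add, derivative_one, derivative_X, zero_mul, mul_zero, add_zero, zero_add,
    mul_one, eval_finset_sum, eval_mul, eval_natCast, eval_add, eval_pow, eval_X, eval_one,
    eval_zero, one_mul, eval_mul, eval_natCast] at h2
  rw [Finset.sum_range_succ] at h2
  simp only [Nat.sub_self, show (abP ℚ 0) = 1 from rfl, derivative_one, eval_zero, mul_zero,
    add_zero, eval_C] at h2
  have h3 : ∀ k ∈ range (j+1), ((j+1+1).choose (k+1) : ℚ) * ((k:ℚ)+1)^k
      * eval 0 (derivative (abP ℚ (j+1-k)))
      = ((j+1+1).choose (k+1) : ℚ) * ((k:ℚ)+1)^k * (((j-k:ℕ):ℚ)+1)^(j-k) := by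
    intro k hk
    rw [mem_range] at hk
    rw [show j+1-k = (j-k)+1 by omega, Ab_deriv_eval_zero]
  rw [Finset.sum_congr rfl h3] at h2
  -- now rewrite the goal sum to match
  rw [show Finset.Ioo 0 (j+2) = Finset.Ico 1 (j+2) by rfl, Finset.sum_Ico_eq_sum_range]
  have h4 : ∀ k ∈ range (j+2-1), ((j+2).choose (1+k) : ℚ) * ((1+k:ℕ):ℚ)^(1+k-1)
      * (((j+2-(1+k) : ℕ)):ℚ)^(j+2-(1+k)-1)
      = ((j+1+1).choose (k+1) : ℚ) * ((k:ℚ)+1)^k * (((j-k:ℕ):ℚ)+1)^(j-k) := by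
    intro k hk
    rw [mem_range] at hk
    rw [show 1+k = k+1 by omega, show k+1-1 = k by omega, show j+2-(k+1) = (j-k)+1 by omega,
      show (j-k)+1-1 = j-k by omega]
    push_cast
    ring
  rw [show j+2-1 = j+1 by omega] at h4 ⊢
  rw [Finset.sum_congr rfl h4, h2]
  -- final arithmetic
  cases j with
  | zero => norm_num
  | succ m =>
    rw [show m+1-1 = m by omega]
    push_cast
    ring

lemma pow_aux (a : ℕ) (ha : 1 ≤ a) : (a:ℚ) * (a:ℚ)^(a-2) = (a:ℚ)^(a-1) := by
  match a, ha with
  | 1, _ => norm_num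
  | (c+2), _ =>
    rw [show c+2-2 = c by omega, show c+2-1 = c+1 by omega, pow_succ]
    ring

/-- **Cayley's formula.** If `T 1 = 1` and
`(d-1)T_d = (1/2) Σ_{a+b=d, a,b≥1} a b C(d,a) T_a T_b`, then `T_d = d^{d-2}` for `d ≥ 1`. -/
theorem cayley_from_tree_recursion
    (T : ℕ → ℚ) (h1 : T 1 = 1)
    (hrec : ∀ d : ℕ, 2 ≤ d →
      ((d : ℚ) - 1) * T d
        = (1 / 2) * ∑ a ∈ Finset.Ioo 0 d,
            (a : ℚ) * ((d - a : ℕ) : ℚ) * (d.choose a : ℚ) * T a * T (d - a)) :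
    ∀ d : ℕ, 1 ≤ d → T d = (d : ℚ) ^ (d - 2) := by
  intro d
  induction d using Nat.strong_induction_on with
  | _ d ih =>
    intro hd
    rcases Nat.lt_or_ge d 2 with hlt | hge
    · interval_cases d
      · simpa using h1
    · obtain ⟨j, rfl⟩ : ∃ j, d = j + 2 := ⟨d - 2, by omega⟩
      have hsum : ∑ a ∈ Finset.Ioo 0 (j+2),
          (a : ℚ) * ((j+2 - a : ℕ) : ℚ) * ((j+2).choose a : ℚ) * T a * T (j+2 - a)
          = ∑ a ∈ Finset.Ioo 0 (j+2),
            ((j+2).choose a : ℚ) * (a:ℚ)^(a-1) * (((j+2-a : ℕ)):ℚ)^(j+2-a-1) := by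
        refine Finset.sum_congr rfl fun a haa => ?_
        rw [Finset.mem_Ioo] at haa
        have ha1 : 1 ≤ a := haa.1
        have ha2 : 1 ≤ j+2-a := by omega
        rw [ih a (by omega) ha1, ih (j+2-a) (by omega) ha2]
        calc (a : ℚ) * ((j+2 - a : ℕ) : ℚ) * ((j+2).choose a : ℚ)
              * (a:ℚ)^(a-2) * (((j+2-a:ℕ)):ℚ)^(j+2-a-2)
            = ((j+2).choose a : ℚ) * ((a:ℚ) * (a:ℚ)^(a-2))
              * (((j+2-a:ℕ):ℚ) * (((j+2-a:ℕ)):ℚ)^(j+2-a-2)) := by ring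
          _ = _ := by rw [pow_aux a ha1, pow_aux _ ha2]
      have hr := hrec (j+2) (by omega)
      rw [hsum, key j] at hr
      have : ((j+2:ℕ):ℚ) - 1 = (j:ℚ)+1 := by push_cast; ring
      rw [this] at hr
      have hj1 : ((j:ℚ)+1) ≠ 0 := by positivity
      have : T (j+2) = ((j:ℚ)+2)^j := by
        refine mul_left_cancel₀ hj1 ?_
        rw [hr]; ring
      rw [this, show j+2-2 = j by omega]
      push_cast
      ring
end

section
/- (Lagrange inversion, applied case) If f(y) = e^y, then the compositional inverse of x = y/f(y) = y·e^{-y} is given by y = Σ_{k≥1} [(d/dy)^{k-1}(e^{ky})|_{y=0}] x^k/k! = Σ_{k≥1} k^{k-1} x^k/k!. -/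
/-!
The constant `(d/dy)^(k-1) e^(ky) |_(y=0)` is `(k-1)!` times the coefficient `k^(k-1)/(k-1)!` of
`y^(k-1)` in `e^(ky)`.

For the inversion, the tree function `T = ∑ k^(k-1) x^k / k!` satisfies `x T' = T (1 + x T')`.
Comparing coefficients, this is `∑_{k=1}^n (n choose k) k^(k-1) (n-k)^(n-k) = n^n`, a derivative
of Abel's binomial identity. That identity is proved by induction on `n` as a polynomial identity
in a shift variable: the derivatives of both sides agree by the induction hypothesis, and at one
point the left side is an `(n+1)`-st finite difference of `k ↦ k^n`, hence zero.
Given the equation, `P = T e^(-T)` satisfies `x P' = P`, so `P` is a multiple of `x`, and its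
linear coefficient is `1`. The truncated sum in the statement agrees with `e^(-T)` up to order `n`,
because `T^j` has order at least `j`.
-/

open Finset PowerSeries
open scoped Nat

theorem sum_range_neg_one_pow_mul_choose_mul_pow {R : Type*} [CommRing R] {m n : ℕ} (h : m < n) :
    ∑ k ∈ range (n + 1), (-1 : R) ^ (n - k) * n.choose k * (k : R) ^ m = 0 := by
  have := fwdDiff_iter_eq_sum_shift (1 : R) (fun r ↦ r ^ m) n 0
  rw [fwdDiff_iter_pow_eq_zero_of_lt h] at this
  simpa [zsmul_eq_mul] using this.symm

namespace Polynomial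

variable {R : Type*} [CommRing R]

theorem eq_of_derivative_eq_of_eval_eq [IsAddTorsionFree R] {p q : R[X]} (a : R)
    (hd : derivative p = derivative q) (he : p.eval a = q.eval a) : p = q := by
  have hc := eq_C_of_derivative_eq_zero (p := p - q) (by rw [derivative_sub, hd, sub_self])
  have h0 : (p - q).coeff 0 = 0 := by simpa [he] using (congrArg (eval a) hc).symm
  rw [h0, map_zero] at hc
  exact sub_eq_zero.mp hc

variable (R) in
/-- The derivative at `x = 0` of the left side of Abel's identity
`∑ k, n.choose k * x * (x + k) ^ (k - 1) * (X + n - k) ^ (n - k) = (x + X + n) ^ n`. -/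
noncomputable def abelPoly (n : ℕ) : R[X] :=
  ∑ k ∈ Icc 1 n, C ((n.choose k : R) * k ^ (k - 1)) * (X + C ((n - k : ℕ) : R)) ^ (n - k)

theorem derivative_abelPoly_succ (n : ℕ) :
    derivative (abelPoly R (n + 1)) = C (n + 1 : R) * (abelPoly R n).comp (X + C 1) := by
  have hterm : ∀ k ∈ Icc 1 n,
      derivative (C (((n + 1).choose k : R) * k ^ (k - 1)) *
          (X + C ((n + 1 - k : ℕ) : R)) ^ (n + 1 - k)) =
        C (n + 1 : R) *
          (C ((n.choose k : R) * k ^ (k - 1)) * (X + C ((n - k : ℕ) : R)) ^ (n - k)).comp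
            (X + C 1) := by
    intro k hk
    obtain ⟨j, rfl⟩ := Nat.exists_eq_add_of_le (mem_Icc.mp hk).2
    have hchoose := congrArg (Nat.cast (R := R[X])) (Nat.choose_mul_succ_eq (k + j) k)
    rw [show k + j + 1 - k = j + 1 by omega] at hchoose ⊢
    simp only [derivative_C_mul, derivative_X_add_C_pow, mul_comp, C_comp, pow_comp, add_comp,
      X_comp, Nat.add_sub_cancel, Nat.add_sub_cancel_left]
    simp only [map_mul, map_natCast, map_pow, map_add, map_one]
    push_cast at hchoose ⊢
    linear_combination (-↑k ^ (k - 1) * (X + (j + 1 : R[X])) ^ j) * hchoose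
  rw [abelPoly, abelPoly, derivative_sum, sum_Icc_succ_top (by omega), Nat.sub_self, pow_zero,
    mul_one, derivative_C, add_zero, sum_congr rfl hterm, ← mul_sum, ← sum_comp]

theorem eval_neg_abelPoly_succ {n : ℕ} (hn : 0 < n) :
    (abelPoly R (n + 1)).eval (-(n + 1 : R)) = 0 := by
  have hterm : ∀ k ∈ Icc 1 (n + 1),
      eval (-(n + 1 : R)) (C (((n + 1).choose k : R) * k ^ (k - 1)) *
          (X + C ((n + 1 - k : ℕ) : R)) ^ (n + 1 - k)) =
        (-1) ^ (n + 1 - k) * (n + 1).choose k * (k : R) ^ n := by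
    intro k hk
    obtain ⟨j, hj⟩ := Nat.exists_eq_add_of_le (mem_Icc.mp hk).2
    have hcast : (n + 1 : R) = k + j := by simpa using congrArg (Nat.cast (R := R)) hj
    rw [hj, Nat.add_sub_cancel_left]
    simp only [eval_mul, eval_C, eval_pow, eval_add, eval_X]
    rw [show -((n : R) + 1) + j = -k by rw [hcast]; ring, neg_pow,
      show n = (k - 1) + j by have := (mem_Icc.mp hk).1; omega, pow_add]
    ring
  have halt := sum_range_neg_one_pow_mul_choose_mul_pow (R := R) (lt_add_one n)
  rw [range_eq_Ico, sum_eq_sum_Ico_succ_bot (by omega), Ico_add_one_right_eq_Icc] at halt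
  rw [abelPoly, eval_finsetSum, sum_congr rfl hterm]
  simpa [zero_pow hn.ne'] using halt

theorem abelPoly_eq [IsAddTorsionFree R] {n : ℕ} (hn : 0 < n) :
    abelPoly R n = C (n : R) * (X + C (n : R)) ^ (n - 1) := by
  induction n, hn using Nat.le_induction with
  | base => simp [abelPoly]
  | succ n hn ih =>
    refine eq_of_derivative_eq_of_eval_eq (-(n + 1 : R)) ?_ ?_
    · rw [derivative_abelPoly_succ, ih, derivative_C_mul, derivative_X_add_C_pow]
      simp only [mul_comp, natCast_comp, pow_comp, add_comp, X_comp, Nat.add_sub_cancel, map_add,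
        map_natCast, map_one]
      push_cast
      ring
    · rw [eval_neg_abelPoly_succ hn]
      simp [zero_pow (by omega : n ≠ 0)]

end Polynomial

theorem sum_Icc_choose_mul_pow_mul_pow {R : Type*} [CommRing R] [IsAddTorsionFree R] {n : ℕ}
    (hn : 0 < n) :
    ∑ k ∈ Icc 1 n, (n.choose k : R) * k ^ (k - 1) * ((n - k : ℕ) : R) ^ (n - k) = n ^ n := by
  have := congrArg (Polynomial.eval 0) (Polynomial.abelPoly_eq (R := R) hn)
  simp only [Polynomial.abelPoly, Polynomial.eval_finsetSum] at this
  simpa [← pow_succ', Nat.sub_add_cancel hn] using this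

namespace PowerSeries

section CommRing
variable {R : Type*} [CommRing R]

theorem coeff_pow_eq_zero_of_lt {g : R⟦X⟧} (hg : constantCoeff g = 0) {n d : ℕ} (h : n < d) :
    coeff n (g ^ d) = 0 :=
  X_pow_dvd_iff.mp (pow_dvd_pow_of_dvd (X_dvd_iff.mpr hg) d) n h

theorem trunc_subst {g : R⟦X⟧} (hg : constantCoeff g = 0) (f : R⟦X⟧) (m : ℕ) :
    trunc m (f.subst g) = trunc m (∑ d ∈ range m, coeff d f • g ^ d) := by
  ext n
  simp only [coeff_trunc]
  split_ifs with hn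
  · rw [coeff_subst' (HasSubst.of_constantCoeff_zero' hg), map_sum,
      finsum_eq_sum_of_support_subset _ (s := range m)]
    · simp
    · intro d hd
      by_contra hdm
      have hpow : coeff n (g ^ d) = 0 := coeff_pow_eq_zero_of_lt hg (by simp at hdm; omega)
      exact hd (by simp only [hpow, smul_zero])
  · rfl

theorem eq_C_mul_X_of_X_mul_derivative_eq [IsAddTorsionFree R] {f : R⟦X⟧}
    (h : X * d⁄dX R f = f) : f = C (coeff 1 f) * X := by
  ext n
  rcases n with _ | n
  · simpa using (congrArg (coeff 0) h).symm
  · have hn := congrArg (coeff (n + 1)) h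
    rw [coeff_succ_X_mul, coeff_derivative] at hn
    rw [coeff_C_mul, coeff_X]
    split_ifs with h1
    · rw [h1, mul_one]
    · rw [mul_zero]
      have : n • coeff (n + 1) f = 0 := by
        rw [nsmul_eq_mul]; linear_combination hn
      exact (smul_eq_zero.mp this).resolve_left (by omega)

end CommRing

section ExpSubst
variable {A : Type*} [CommRing A] [Algebra ℚ A]

theorem constantCoeff_iterate_derivative_rescale_exp (c : A) (m : ℕ) :
    constantCoeff ((d⁄dX A)^[m] (rescale c (exp A))) = c ^ m := by
  rw [constantCoeff_iterate_derivative, coeff_rescale, coeff_exp,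
    ← map_natCast (algebraMap ℚ A), mul_left_comm, ← map_mul]
  simp [Nat.factorial_ne_zero]

theorem derivative_exp_subst {g : A⟦X⟧} (hg : constantCoeff g = 0) :
    d⁄dX A ((exp A).subst g) = (exp A).subst g * d⁄dX A g := by
  rw [derivative_subst (HasSubst.of_constantCoeff_zero' hg), derivative_exp]

theorem constantCoeff_exp_subst {g : A⟦X⟧} (hg : constantCoeff g = 0) :
    constantCoeff ((exp A).subst g) = 1 := by
  have := congrArg (Polynomial.coeff · 0) (trunc_subst hg (exp A) 1)
  simpa [coeff_trunc] using this

theorem mul_exp_subst_neg_eq_X [IsAddTorsionFree A] {T : A⟦X⟧} (h0 : constantCoeff T = 0)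
    (h1 : coeff 1 T = 1) (hT : X * d⁄dX A T = T * (1 + X * d⁄dX A T)) :
    T * (exp A).subst (-T) = X := by
  set E := (exp A).subst (-T)
  have hneg : constantCoeff (-T) = 0 := by rw [map_neg, h0, neg_zero]
  have hP : X * d⁄dX A (T * E) = T * E := by
    rw [Derivation.leibniz, derivative_exp_subst hneg, map_neg, smul_eq_mul, smul_eq_mul]
    linear_combination E * hT
  have hE : coeff 0 E = 1 := by
    rw [coeff_zero_eq_constantCoeff_apply, constantCoeff_exp_subst hneg]
  rw [eq_C_mul_X_of_X_mul_derivative_eq hP, coeff_mul, Nat.antidiagonal_succ]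
  simp [hE, h0, h1]

end ExpSubst

end PowerSeries

noncomputable def treeFun : ℚ⟦X⟧ :=
  mk fun k => if k = 0 then 0 else ((k : ℚ) ^ (k - 1)) / (k.factorial : ℚ)

theorem coeff_treeFun (n : ℕ) :
    coeff n treeFun = if n = 0 then 0 else (n : ℚ) ^ (n - 1) / n ! := by
  simp [treeFun]

theorem constantCoeff_treeFun : constantCoeff treeFun = 0 := by
  simp [← coeff_zero_eq_constantCoeff_apply, coeff_treeFun]

theorem coeff_one_treeFun : coeff 1 treeFun = 1 := by
  simp [coeff_treeFun]

theorem one_add_X_mul_derivative_treeFun :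
    1 + X * d⁄dX ℚ treeFun = mk fun n => (n : ℚ) ^ n / n ! := by
  ext (_ | n)
  · simp
  · rw [map_add, coeff_succ_X_mul, coeff_derivative, coeff_treeFun, if_neg n.succ_ne_zero,
      coeff_one, if_neg n.succ_ne_zero, coeff_mk, Nat.factorial_succ]
    push_cast
    field_simp
    ring

theorem X_mul_derivative_treeFun :
    X * d⁄dX ℚ treeFun = treeFun * (1 + X * d⁄dX ℚ treeFun) := by
  have hU := one_add_X_mul_derivative_treeFun
  rw [hU, eq_sub_of_add_eq' hU]
  ext n
  rcases Nat.eq_zero_or_pos n with rfl | hn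
  · simp [constantCoeff_treeFun]
  have hterm : ∀ k ∈ Icc 1 n, coeff k treeFun * ((n - k : ℕ) : ℚ) ^ (n - k) / (n - k)! =
      (n.choose k : ℚ) * k ^ (k - 1) * ((n - k : ℕ) : ℚ) ^ (n - k) / n ! := by
    intro k hk
    obtain ⟨hk1, hkn⟩ := mem_Icc.mp hk
    rw [coeff_treeFun, if_neg (by omega), Nat.cast_choose ℚ hkn]
    field_simp
  rw [map_sub, coeff_mk, coeff_one, if_neg hn.ne', sub_zero, coeff_mul,
    Nat.sum_antidiagonal_eq_sum_range_succ_mk, range_eq_Ico, sum_eq_sum_Ico_succ_bot (by omega),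
    Nat.succ_eq_add_one, zero_add, Ico_add_one_right_eq_Icc]
  simp only [coeff_mk, coeff_zero_eq_constantCoeff_apply, constantCoeff_treeFun, zero_mul,
    zero_div, zero_add, ← mul_div_assoc]
  rw [sum_congr rfl hterm, ← sum_div, sum_Icc_choose_mul_pow_mul_pow hn]

/-- **Lagrange inversion, applied case.** For `f(y) = e^y`, the Lagrange
inversion coefficients are `(d/dy)^{k-1}(e^{ky})|_{y=0} = k^{k-1}`, and the series
`y = Σ_{k≥1} k^{k-1} x^k/k!` is the compositional inverse of `x = y·e^{-y}`, i.e.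
substituting it into `t·e^{-t}` returns `x` (computed coefficientwise, the exponential
of a series with zero constant term being `Σ_j (-1)^j t^j/j!`). -/
theorem lagrange_inversion_exponential_case
    (w : PowerSeries ℚ)
    (hw : w = PowerSeries.mk fun k =>
      if k = 0 then 0 else ((k : ℚ) ^ (k - 1)) / (k.factorial : ℚ)) :
    (∀ k : ℕ, 1 ≤ k →
      constantCoeff ((fun f => d⁄dX ℚ f)^[k - 1] (rescale (k : ℚ) (exp ℚ)))
        = (k : ℚ) ^ (k - 1))
    ∧ ∀ n : ℕ,
        coeff n (w * ∑ j ∈ Finset.range (n + 1),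
            (((-1 : ℚ) ^ j / (j.factorial : ℚ)) • w ^ j))
          = coeff n (X : PowerSeries ℚ) := by
  obtain rfl : w = treeFun := hw
  refine ⟨fun k _ ↦ constantCoeff_iterate_derivative_rescale_exp (k : ℚ) (k - 1),
    fun n ↦ ?_⟩
  have hsum : ∑ j ∈ range (n + 1), ((-1 : ℚ) ^ j / j !) • treeFun ^ j =
      ∑ j ∈ range (n + 1), coeff j (exp ℚ) • (-treeFun) ^ j := by
    refine sum_congr rfl fun j _ ↦ ?_
    rw [coeff_exp, Algebra.algebraMap_self_apply, ← neg_one_smul ℚ treeFun, smul_pow, smul_smul,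
      one_div_mul_eq_div]
  rw [coeff_mul_eq_coeff_trunc_mul_trunc _ _ (lt_add_one n), hsum,
    ← trunc_subst (by rw [map_neg, constantCoeff_treeFun, neg_zero]),
    ← coeff_mul_eq_coeff_trunc_mul_trunc _ _ (lt_add_one n),
    mul_exp_subst_neg_eq_X constantCoeff_treeFun coeff_one_treeFun X_mul_derivative_treeFun]
end

section
/- Let r ≥ 1, x_i = x(z_i) = z_i·e^{-z_i^r}. The function F(z₁,z₂) = log((z₁-z₂)/(x(z₁)-x(z₂))) - (z₁^r + z₂^r), which is holomorphic near (0,0), satisfies the PDE (1/r)·(z₁∂/∂z₁ + z₂∂/∂z₂)F = (x₁z₁^r - x₂z₂^r)/(x₁-x₂) - (z₁^r + z₂^r), and vanishes when z₁ = 0. -/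
open Real

/-- The parametrization `x(z) = z·e^{-z^r}` of the r-Lambert curve. -/
noncomputable def rLambertX (r : ℕ) (z : ℂ) : ℂ := z * Complex.exp (-(z ^ r))

/-- The free energy `F₀,₂` in the spectral-curve coordinates:
`F(z₁,z₂) = log((z₁-z₂)/(x(z₁)-x(z₂))) - (z₁^r + z₂^r)`. -/
noncomputable def F02 (r : ℕ) (z₁ z₂ : ℂ) : ℂ :=
  Complex.log ((z₁ - z₂) / (rLambertX r z₁ - rLambertX r z₂)) - (z₁ ^ r + z₂ ^ r)

/-!
Both partial derivatives of `F` are logarithmic derivatives, and the Euler operator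
`z ∂/∂z` acts on `x(z) = z e^{-z^r}` by `z x'(z) = x(z) (1 - r z^r)`. Hence
`(z₁∂₁ + z₂∂₂) log((z₁-z₂)/(x₁-x₂)) = 1 - (x₁(1 - r z₁^r) - x₂(1 - r z₂^r))/(x₁-x₂)
= r (x₁z₁^r - x₂z₂^r)/(x₁-x₂)`, while `z₁^r + z₂^r` is homogeneous of degree `r`.
At `z₁ = 0` the ratio is `e^{z₂^r}`, whose principal logarithm is `z₂^r` on the stated branch.
-/

theorem HasDerivAt.clog_div_sub {f : ℂ → ℂ} {f' a b : ℂ} (hf : HasDerivAt f f' a)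
    (hslit : (a - b) / (f a - f b) ∈ Complex.slitPlane) :
    HasDerivAt (fun w => Complex.log ((w - b) / (f w - f b))) (1 / (a - b) - f' / (f a - f b)) a := by
  obtain ⟨hab, hfab⟩ := div_ne_zero_iff.mp (Complex.slitPlane_ne_zero hslit)
  have hratio := ((hasDerivAt_id' a).sub_const b).fun_div (hf.sub_const (f b)) hfab
  refine (hratio.clog hslit).congr_deriv ?_
  field_simp

theorem rLambertX_zero (r : ℕ) : rLambertX r 0 = 0 :=
  zero_mul _

theorem mul_natCast_mul_pow_sub_one {R : Type*} [CommSemiring R] (n : ℕ) (z : R) :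
    z * (n * z ^ (n - 1)) = n * z ^ n := by
  rcases Nat.eq_zero_or_pos n with rfl | hn
  · simp
  · rw [mul_left_comm, mul_pow_sub_one hn.ne']

theorem hasDerivAt_rLambertX (r : ℕ) (z : ℂ) :
    HasDerivAt (rLambertX r) (Complex.exp (-(z ^ r)) * (1 - r * z ^ r)) z := by
  refine ((hasDerivAt_id' z).fun_mul (hasDerivAt_pow r z).fun_neg.cexp).congr_deriv ?_
  rw [mul_left_comm, mul_neg, mul_natCast_mul_pow_sub_one]
  ring

theorem F02_comm (r : ℕ) (z₁ z₂ : ℂ) : F02 r z₁ z₂ = F02 r z₂ z₁ := by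
  rw [F02, F02, ← neg_div_neg_eq, neg_sub, neg_sub, add_comm]

theorem mul_deriv_F02_left (r : ℕ) {z₁ z₂ : ℂ}
    (hslit : (z₁ - z₂) / (rLambertX r z₁ - rLambertX r z₂) ∈ Complex.slitPlane) :
    z₁ * deriv (fun w => F02 r w z₂) z₁
      = z₁ / (z₁ - z₂) - rLambertX r z₁ * (1 - r * z₁ ^ r) / (rLambertX r z₁ - rLambertX r z₂)
        - r * z₁ ^ r := by
  have hF : HasDerivAt (fun w => F02 r w z₂) _ z₁ :=
    (HasDerivAt.clog_div_sub (hasDerivAt_rLambertX r z₁) hslit).fun_sub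
      ((hasDerivAt_pow r z₁).add_const (z₂ ^ r))
  rw [hF.deriv, mul_sub, mul_sub, mul_natCast_mul_pow_sub_one, rLambertX]
  ring

theorem mul_deriv_F02_right (r : ℕ) {z₁ z₂ : ℂ}
    (hslit : (z₁ - z₂) / (rLambertX r z₁ - rLambertX r z₂) ∈ Complex.slitPlane) :
    z₂ * deriv (fun w => F02 r z₁ w) z₂
      = z₂ / (z₂ - z₁) - rLambertX r z₂ * (1 - r * z₂ ^ r) / (rLambertX r z₂ - rLambertX r z₁)
        - r * z₂ ^ r := by
  rw [← neg_div_neg_eq, neg_sub, neg_sub] at hslit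
  simp_rw [F02_comm r z₁]
  exact mul_deriv_F02_left r hslit

theorem F02_zero_left {r : ℕ} (hr : r ≠ 0) {z : ℂ} (hz : z ≠ 0)
    (hbranch : (z ^ r).im ∈ Set.Ioc (-π) π) : F02 r 0 z = 0 := by
  have hratio : (0 - z) / (rLambertX r 0 - rLambertX r z) = Complex.exp (z ^ r) := by
    rw [rLambertX_zero, rLambertX, zero_sub, zero_sub, neg_div_neg_eq, Complex.exp_neg]
    field_simp
  rw [F02, hratio, Complex.log_exp hbranch.1 hbranch.2, zero_pow hr, zero_add, sub_self]

/-- `F(z₁,z₂) = log((z₁-z₂)/(x₁-x₂)) - (z₁^r + z₂^r)` satisfies the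
PDE `(1/r)(z₁∂₁ + z₂∂₂)F = (x₁z₁^r - x₂z₂^r)/(x₁-x₂) - (z₁^r + z₂^r)` (off the
diagonal, with the ratio in the domain of the logarithm), and it vanishes when
`z₁ = 0` (with the branch condition `Im z₂^r ∈ (-π, π]`). -/
theorem F02_pde_and_initial_condition (r : ℕ) (hr : 1 ≤ r) :
    (∀ z₁ z₂ : ℂ, z₁ ≠ z₂ → rLambertX r z₁ ≠ rLambertX r z₂ →
      (z₁ - z₂) / (rLambertX r z₁ - rLambertX r z₂) ∈ Complex.slitPlane →
      (1 / (r : ℂ)) * (z₁ * deriv (fun w => F02 r w z₂) z₁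
          + z₂ * deriv (fun w => F02 r z₁ w) z₂)
        = (rLambertX r z₁ * z₁ ^ r - rLambertX r z₂ * z₂ ^ r)
            / (rLambertX r z₁ - rLambertX r z₂) - (z₁ ^ r + z₂ ^ r))
    ∧ ∀ z₂ : ℂ, z₂ ≠ 0 → (z₂ ^ r).im ∈ Set.Ioc (-π) π → F02 r 0 z₂ = 0 := by
  have hr₀ : r ≠ 0 := Nat.one_le_iff_ne_zero.mp hr
  refine ⟨fun z₁ z₂ hz hx hslit => ?_, fun z₂ => F02_zero_left hr₀⟩
  rw [mul_deriv_F02_left r hslit, mul_deriv_F02_right r hslit]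
  have hz' : z₁ - z₂ ≠ 0 := sub_ne_zero.mpr hz
  have hx' : rLambertX r z₁ - rLambertX r z₂ ≠ 0 := sub_ne_zero.mpr hx
  have hr' : (r : ℂ) ≠ 0 := Nat.cast_ne_zero.mpr hr₀
  rw [← neg_sub z₁ z₂, ← neg_sub (rLambertX r z₁)]
  field_simp
  ring
end
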